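/- For each κ ∈ (0,1) let U_κ be an odd zero-up ground state for parameter κ. Assume there exist constants c > 0 and κ₀ ∈ (0,1) such that for all κ ∈ (0, κ₀) and all x ∈ [0, π/2], 0 ≤ tanh(x/(√2 κ)) − U_κ(x) ≤ exp(−c/κ). Then lim_{κ → 0⁺} E_κ(U_κ)/κ = (4/3)√2, where E_κ denotes the energy functional with diffusion coefficient κ. -/

import Mathlib

open Real MeasureTheory Set

noncomputable section

/-- An odd zero-up ground state for parameter `κ`: a `2π`-periodic, odd, twice
continuously differentiable function `U : ℝ → ℝ` satisfying
`κ² U'' + U − U³ = 0` on `ℝ`, with `U' > 0` on `[0, π/2)` and `U' < 0` on `(π/2, π]`. -/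
def IsOddZeroUpGroundState (κ : ℝ) (U : ℝ → ℝ) : Prop :=
  ContDiff ℝ 2 U ∧
  Function.Periodic U (2 * π) ∧
  (∀ x : ℝ, U (-x) = - U x) ∧
  (∀ x : ℝ, κ ^ 2 * deriv (deriv U) x + U x - U x ^ 3 = 0) ∧
  (∀ x ∈ Set.Ico (0 : ℝ) (π / 2), 0 < deriv U x) ∧
  (∀ x ∈ Set.Ioc (π / 2) π, deriv U x < 0)

/-- The Allen–Cahn energy with diffusion coefficient `κ`. -/
def energy (κ : ℝ) (u : ℝ → ℝ) : ℝ :=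
  ∫ x in (-π)..π, (κ ^ 2 / 2 * (deriv u x) ^ 2 + (1 - u x ^ 2) ^ 2 / 4)

/-- The `L²` norm over one period `(-π, π)`. -/
def L2norm (f : ℝ → ℝ) : ℝ := Real.sqrt (∫ x in (-π)..π, (f x) ^ 2)

/-- The `H¹` norm over one period `(-π, π)`. -/
def H1norm (f : ℝ → ℝ) : ℝ := Real.sqrt (L2norm f ^ 2 + L2norm (deriv f) ^ 2)

/-!
Multiplying the equation by `U'` gives the first integral
`κ² U'² = ((1 - U²)² - (1 - m²)²) / 2` with `m = U (π/2)`, the maximum of `U`.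
Oddness makes `U'²` even, and on each of the monotone quarter periods `[0, π/2]` and `[π/2, π]`
the substitution `u = U x` turns `κ ∫ U'²` into the `κ`-free integral `L(m)` below. Hence
`E_κ(U)/κ = 4 L(m) + π (1 - m²)² / (2κ)`, where `2m³/(3√2) ≤ L(m) ≤ (m - m³/3)/√2`.
At `x = π/2` the tanh approximation makes `1 - m` exponentially small in `1/κ`, so
`L(m) → √2/3` and the boundary term vanishes.
-/

open Filter Topology

theorem Real.one_sub_tanh_le (y : ℝ) : 1 - tanh y ≤ 2 * exp (-(2 * y)) := by
  have hcosh : exp y / 2 ≤ cosh y := by rw [cosh_eq]; linarith [exp_pos (-y)]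
  have hexp : exp (-(2 * y)) * exp y = exp (-y) := by rw [← exp_add]; ring_nf
  have h : 1 - tanh y = exp (-y) / cosh y := by
    rw [tanh_eq_sinh_div_cosh, sinh_eq, cosh_eq]
    field_simp
    ring
  rw [h, div_le_iff₀ (cosh_pos y)]
  nlinarith [exp_pos (-(2 * y))]

theorem Real.tendsto_exp_neg_div_div_nhdsGT_zero {a : ℝ} (ha : 0 < a) :
    Tendsto (fun κ => exp (-a / κ) / κ) (𝓝[>] 0) (𝓝 0) := by
  have ht : Tendsto (fun κ => a / κ) (𝓝[>] 0) atTop := by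
    simpa only [div_eq_mul_inv] using tendsto_inv_nhdsGT_zero.const_mul_atTop ha
  have h := ((tendsto_pow_mul_exp_neg_atTop_nhds_zero 1).comp ht).const_mul a⁻¹
  rw [mul_zero] at h
  refine h.congr fun κ => ?_
  simp only [Function.comp_apply, pow_one, neg_div]
  field_simp

-- `layerIntegral m` is `κ ∫₀^{π/2} U'²` for a ground state with maximum `m`, see `energy_eq`.
def layerIntegrand (m u : ℝ) : ℝ := √(((1 - u ^ 2) ^ 2 - (1 - m ^ 2) ^ 2) / 2)

def layerIntegral (m : ℝ) : ℝ := ∫ u in 0..m, layerIntegrand m u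

theorem continuous_layerIntegrand (m : ℝ) : Continuous (layerIntegrand m) := by
  unfold layerIntegrand; fun_prop

theorem layerIntegrand_le {m u : ℝ} (hu : u ∈ Icc 0 m) (hm : m ≤ 1) :
    layerIntegrand m u ≤ (1 - u ^ 2) / √2 := by
  have h1u : 0 ≤ 1 - u ^ 2 := by nlinarith [hu.1, hu.2]
  calc layerIntegrand m u ≤ √((1 - u ^ 2) ^ 2 / 2) := by
        unfold layerIntegrand; gcongr; nlinarith [sq_nonneg (1 - m ^ 2)]
    _ = (1 - u ^ 2) / √2 := by rw [sqrt_div' _ zero_le_two, sqrt_sq h1u]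

theorem le_layerIntegrand {m u : ℝ} (hu : u ∈ Icc 0 m) (hm : m ≤ 1) :
    (m ^ 2 - u ^ 2) / √2 ≤ layerIntegrand m u := by
  have hmu : 0 ≤ m ^ 2 - u ^ 2 := by nlinarith [hu.1, hu.2]
  have h1m : 0 ≤ 1 - m ^ 2 := by nlinarith [hu.1, hu.2]
  calc (m ^ 2 - u ^ 2) / √2 = √((m ^ 2 - u ^ 2) ^ 2 / 2) := by
        rw [sqrt_div' _ zero_le_two, sqrt_sq hmu]
    _ ≤ layerIntegrand m u := by
        unfold layerIntegrand; gcongr; nlinarith [mul_nonneg h1m hmu]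

theorem layerIntegral_le {m : ℝ} (hm₀ : 0 ≤ m) (hm : m ≤ 1) :
    layerIntegral m ≤ (m - m ^ 3 / 3) / √2 := by
  have h : ∫ u in 0..m, (1 - u ^ 2) / √2 = (m - m ^ 3 / 3) / √2 := by
    norm_num [intervalIntegral.integral_div, integral_pow]
  rw [← h]
  exact intervalIntegral.integral_mono_on hm₀
    ((continuous_layerIntegrand m).intervalIntegrable _ _)
    (Continuous.intervalIntegrable (by fun_prop) _ _) fun u hu => layerIntegrand_le hu hm

theorem le_layerIntegral {m : ℝ} (hm₀ : 0 ≤ m) (hm : m ≤ 1) :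
    2 * m ^ 3 / 3 / √2 ≤ layerIntegral m := by
  have h : ∫ u in 0..m, (m ^ 2 - u ^ 2) / √2 = 2 * m ^ 3 / 3 / √2 := by
    rw [intervalIntegral.integral_div, intervalIntegral.integral_sub (by simp) (by simp)]
    simp only [intervalIntegral.integral_const, integral_pow, smul_eq_mul]
    ring
  rw [← h]
  exact intervalIntegral.integral_mono_on hm₀ (Continuous.intervalIntegrable (by fun_prop) _ _)
    ((continuous_layerIntegrand m).intervalIntegrable _ _) fun u hu => le_layerIntegrand hu hm

theorem tendsto_layerIntegral : Tendsto layerIntegral (𝓝[≤] 1) (𝓝 (√2 / 3)) := by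
  have hval : √2 / 3 = 2 * 1 ^ 3 / 3 / √2 ∧ √2 / 3 = (1 - 1 ^ 3 / 3 : ℝ) / √2 := by
    constructor <;> field_simp <;> norm_num
  have hlower : Tendsto (fun m : ℝ => 2 * m ^ 3 / 3 / √2) (𝓝[≤] 1) (𝓝 (√2 / 3)) := by
    rw [hval.1]; exact (Continuous.tendsto (by fun_prop) 1).mono_left nhdsWithin_le_nhds
  have hupper : Tendsto (fun m : ℝ => (m - m ^ 3 / 3) / √2) (𝓝[≤] 1) (𝓝 (√2 / 3)) := by
    rw [hval.2]; exact (Continuous.tendsto (by fun_prop) 1).mono_left nhdsWithin_le_nhds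
  have hIcc : Icc (0 : ℝ) 1 ∈ 𝓝[≤] 1 := Icc_mem_nhdsLE zero_lt_one
  refine tendsto_of_tendsto_of_tendsto_of_le_of_le' hlower hupper ?_ ?_ <;>
    filter_upwards [hIcc] with m hm
  exacts [le_layerIntegral hm.1 hm.2, layerIntegral_le hm.1 hm.2]

theorem hamiltonian_eq {κ : ℝ} {U : ℝ → ℝ} (hU : ContDiff ℝ 2 U)
    (hode : ∀ x, κ ^ 2 * deriv (deriv U) x + U x - U x ^ 3 = 0) (x y : ℝ) :
    κ ^ 2 * deriv U x ^ 2 - (1 - U x ^ 2) ^ 2 / 2 =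
      κ ^ 2 * deriv U y ^ 2 - (1 - U y ^ 2) ^ 2 / 2 := by
  have hU1 : Differentiable ℝ U := hU.differentiable two_ne_zero
  have hU2 : Differentiable ℝ (deriv U) :=
    (ContDiff.deriv' (n := 1) hU).differentiable one_ne_zero
  have hH : ∀ z, HasDerivAt (fun z => κ ^ 2 * deriv U z ^ 2 - (1 - U z ^ 2) ^ 2 / 2) 0 z := by
    intro z
    refine ((((hU2 z).hasDerivAt.pow 2).const_mul (κ ^ 2)).sub
      ((((hU1 z).hasDerivAt.pow 2).const_sub 1).pow 2 |>.div_const 2)).congr_deriv ?_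
    simp only [Pi.pow_apply]
    linear_combination (2 * deriv U z) * hode z
  exact is_const_of_deriv_eq_zero (fun z => (hH z).differentiableAt) (fun z => (hH z).deriv) x y

namespace IsOddZeroUpGroundState

variable {κ : ℝ} {U : ℝ → ℝ}

theorem differentiable (h : IsOddZeroUpGroundState κ U) : Differentiable ℝ U :=
  h.1.differentiable two_ne_zero

theorem continuous_deriv (h : IsOddZeroUpGroundState κ U) : Continuous (deriv U) :=
  h.1.continuous_deriv one_le_two

theorem map_zero (h : IsOddZeroUpGroundState κ U) : U 0 = 0 := by
  obtain ⟨-, -, hodd, -⟩ := h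
  linarith [neg_zero (G := ℝ) ▸ hodd 0]

theorem map_pi (h : IsOddZeroUpGroundState κ U) : U π = 0 := by
  obtain ⟨-, hper, hodd, -⟩ := h
  have hπ := hodd π
  rw [← hper (-π), show -π + 2 * π = π by ring] at hπ
  linarith

theorem deriv_neg (h : IsOddZeroUpGroundState κ U) (x : ℝ) : deriv U (-x) = deriv U x := by
  obtain ⟨-, -, hodd, -⟩ := h
  have hcomp := deriv_comp_neg U x
  rw [show (fun y => U (-y)) = -U from funext hodd, deriv.neg] at hcomp
  linarith

theorem deriv_pi_div_two (h : IsOddZeroUpGroundState κ U) : deriv U (π / 2) = 0 := by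
  have hcont := h.continuous_deriv.continuousAt (x := π / 2)
  obtain ⟨-, -, -, -, hrise, hfall⟩ := h
  have hle : deriv U (π / 2) ≤ 0 := by
    refine le_of_tendsto (hcont.tendsto.mono_left (nhdsWithin_le_nhds (s := Ioi (π / 2)))) ?_
    filter_upwards [Ioo_mem_nhdsGT (by linarith [pi_pos] : π / 2 < π)] with x hx
    exact (hfall x ⟨hx.1, hx.2.le⟩).le
  have hge : 0 ≤ deriv U (π / 2) := by
    refine ge_of_tendsto (hcont.tendsto.mono_left (nhdsWithin_le_nhds (s := Iio (π / 2)))) ?_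
    filter_upwards [Ioo_mem_nhdsLT (by linarith [pi_pos] : 0 < π / 2)] with x hx
    exact (hrise x ⟨hx.1.le, hx.2⟩).le
  linarith

theorem deriv_nonneg (h : IsOddZeroUpGroundState κ U) {x : ℝ} (hx : x ∈ Icc 0 (π / 2)) :
    0 ≤ deriv U x := by
  rcases hx.2.lt_or_eq with hlt | rfl
  exacts [(h.2.2.2.2.1 x ⟨hx.1, hlt⟩).le, h.deriv_pi_div_two.ge]

theorem deriv_nonpos (h : IsOddZeroUpGroundState κ U) {x : ℝ} (hx : x ∈ Icc (π / 2) π) :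
    deriv U x ≤ 0 := by
  rcases hx.1.lt_or_eq with hlt | rfl
  exacts [(h.2.2.2.2.2 x ⟨hlt, hx.2⟩).le, h.deriv_pi_div_two.le]

theorem sq_mul_deriv_sq (h : IsOddZeroUpGroundState κ U) (x : ℝ) :
    κ ^ 2 * deriv U x ^ 2 = ((1 - U x ^ 2) ^ 2 - (1 - U (π / 2) ^ 2) ^ 2) / 2 := by
  have hH := hamiltonian_eq h.1 h.2.2.2.1 x (π / 2)
  rw [h.deriv_pi_div_two] at hH
  linear_combination hH

theorem layerIntegrand_comp (h : IsOddZeroUpGroundState κ U) (hκ : 0 < κ) (x : ℝ) :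
    layerIntegrand (U (π / 2)) (U x) = κ * |deriv U x| := by
  rw [layerIntegrand, ← h.sq_mul_deriv_sq, ← mul_pow, sqrt_sq_eq_abs, abs_mul, abs_of_pos hκ]

theorem mul_integral_deriv_sq (h : IsOddZeroUpGroundState κ U) (hκ : 0 < κ) :
    κ * ∫ x in 0..π, deriv U x ^ 2 = 2 * layerIntegral (U (π / 2)) := by
  have hsubst (a b : ℝ) : ∫ x in a..b, deriv U x * layerIntegrand (U (π / 2)) (U x) =
      ∫ u in U a..U b, layerIntegrand (U (π / 2)) u := by
    simpa only [smul_eq_mul, Function.comp_apply] using intervalIntegral.integral_deriv_smul_comp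
      (g := layerIntegrand (U (π / 2))) (fun x _ => (h.differentiable x).hasDerivAt)
      h.continuous_deriv.continuousOn (continuous_layerIntegrand _)
  have hrise : κ * ∫ x in 0..π / 2, deriv U x ^ 2 = layerIntegral (U (π / 2)) := by
    have hs := hsubst 0 (π / 2)
    rw [h.map_zero] at hs
    rw [layerIntegral, ← hs, ← intervalIntegral.integral_const_mul]
    refine intervalIntegral.integral_congr fun x hx => ?_
    rw [uIcc_of_le (by positivity)] at hx
    rw [h.layerIntegrand_comp hκ, abs_of_nonneg (h.deriv_nonneg hx)]
    ring
  have hfall : κ * ∫ x in π / 2..π, deriv U x ^ 2 = layerIntegral (U (π / 2)) := by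
    have hs := hsubst (π / 2) π
    rw [h.map_pi, intervalIntegral.integral_symm 0] at hs
    rw [layerIntegral, ← neg_neg (∫ u in 0..U (π / 2), _), ← hs,
      ← intervalIntegral.integral_neg, ← intervalIntegral.integral_const_mul]
    refine intervalIntegral.integral_congr fun x hx => ?_
    rw [uIcc_of_le (by linarith [pi_pos])] at hx
    rw [h.layerIntegrand_comp hκ, abs_of_nonpos (h.deriv_nonpos hx)]
    ring
  have hint : Continuous fun x => deriv U x ^ 2 := h.continuous_deriv.pow 2
  rw [← intervalIntegral.integral_add_adjacent_intervals (b := π / 2)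
    (hint.intervalIntegrable _ _) (hint.intervalIntegrable _ _), mul_add, hrise, hfall]
  ring

theorem integral_deriv_sq (h : IsOddZeroUpGroundState κ U) :
    ∫ x in -π..π, deriv U x ^ 2 = 2 * ∫ x in 0..π, deriv U x ^ 2 := by
  have hint : Continuous fun x => deriv U x ^ 2 := h.continuous_deriv.pow 2
  have hneg : ∫ x in -π..0, deriv U x ^ 2 = ∫ x in 0..π, deriv U x ^ 2 := by
    simpa [h.deriv_neg] using (intervalIntegral.integral_comp_neg (a := 0) (b := π)
      (fun x => deriv U x ^ 2)).symm
  rw [← intervalIntegral.integral_add_adjacent_intervals (b := 0)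
    (hint.intervalIntegrable _ _) (hint.intervalIntegrable _ _), hneg]
  ring

theorem energy_eq (h : IsOddZeroUpGroundState κ U) (hκ : 0 < κ) :
    energy κ U = 4 * κ * layerIntegral (U (π / 2)) + π * (1 - U (π / 2) ^ 2) ^ 2 / 2 := by
  have hintegrand (x : ℝ) : κ ^ 2 / 2 * deriv U x ^ 2 + (1 - U x ^ 2) ^ 2 / 4 =
      κ ^ 2 * deriv U x ^ 2 + (1 - U (π / 2) ^ 2) ^ 2 / 4 := by
    linear_combination (-1 / 2) * h.sq_mul_deriv_sq x
  have hint : Continuous fun x => κ ^ 2 * deriv U x ^ 2 := by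
    have := h.continuous_deriv; fun_prop
  rw [energy, intervalIntegral.integral_congr fun x _ => hintegrand x,
    intervalIntegral.integral_add (hint.intervalIntegrable _ _) intervalIntegrable_const,
    intervalIntegral.integral_const_mul, h.integral_deriv_sq, intervalIntegral.integral_const,
    smul_eq_mul]
  linear_combination (2 * κ) * h.mul_integral_deriv_sq hκ

end IsOddZeroUpGroundState

theorem tendsto_four_mul_layerIntegral_add {m : ℝ → ℝ} (hle : ∀ᶠ κ in 𝓝[>] 0, m κ ≤ 1)
    (hgap : Tendsto (fun κ => (1 - m κ) / κ) (𝓝[>] 0) (𝓝 0)) :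
    Tendsto (fun κ => 4 * layerIntegral (m κ) + π / 2 * ((1 - m κ ^ 2) ^ 2 / κ)) (𝓝[>] 0)
      (𝓝 (4 / 3 * √2)) := by
  have hκ : Tendsto (fun κ : ℝ => κ) (𝓝[>] 0) (𝓝 0) := nhdsWithin_le_nhds
  have hpos : ∀ᶠ κ : ℝ in 𝓝[>] 0, κ ≠ 0 :=
    eventually_mem_nhdsWithin.mono fun κ hκ => ne_of_gt hκ
  have hm : Tendsto m (𝓝[>] 0) (𝓝 1) := by
    refine (by simpa using tendsto_const_nhds.sub (hκ.mul hgap) :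
      Tendsto (fun κ => 1 - κ * ((1 - m κ) / κ)) _ (𝓝 1)).congr' ?_
    filter_upwards [hpos] with κ hκ
    field_simp
    ring
  have hrem : Tendsto (fun κ => (1 - m κ ^ 2) ^ 2 / κ) (𝓝[>] 0) (𝓝 0) := by
    refine (by simpa using (hκ.mul (hgap.pow 2)).mul ((tendsto_const_nhds.add hm).pow 2) :
      Tendsto (fun κ => κ * ((1 - m κ) / κ) ^ 2 * (1 + m κ) ^ 2) _ (𝓝 0)).congr' ?_
    filter_upwards [hpos] with κ hκ
    field_simp
    ring
  rw [show (4 / 3 * √2 : ℝ) = 4 * (√2 / 3) + π / 2 * 0 by ring]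
  exact ((tendsto_layerIntegral.comp (tendsto_nhdsWithin_iff.mpr ⟨hm, hle⟩)).const_mul 4).add
    (hrem.const_mul (π / 2))

/-- under the tanh-approximation assumption,
`E_κ(U_κ)/κ → (4/3)√2` as `κ → 0⁺`. -/
theorem ground_state_energy_limit (U : ℝ → ℝ → ℝ)
    (hU : ∀ κ ∈ Set.Ioo (0 : ℝ) 1, IsOddZeroUpGroundState κ (U κ))
    (happrox : ∃ c : ℝ, 0 < c ∧ ∃ κ₀ ∈ Set.Ioo (0 : ℝ) 1,
      ∀ κ ∈ Set.Ioo (0 : ℝ) κ₀, ∀ x ∈ Set.Icc (0 : ℝ) (π / 2),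
        0 ≤ Real.tanh (x / (Real.sqrt 2 * κ)) - U κ x ∧
        Real.tanh (x / (Real.sqrt 2 * κ)) - U κ x ≤ Real.exp (-c / κ)) :
    Filter.Tendsto (fun κ : ℝ => energy κ (U κ) / κ)
      (nhdsWithin 0 (Set.Ioi 0)) (nhds (4 / 3 * Real.sqrt 2)) := by
  obtain ⟨c, hc, κ₀, hκ₀, happ⟩ := happrox
  have hsmall : ∀ᶠ κ in 𝓝[>] 0, κ ∈ Ioo 0 κ₀ := Ioo_mem_nhdsGT hκ₀.1
  have hbound : ∀ᶠ κ in 𝓝[>] 0, U κ (π / 2) ≤ 1 ∧ 0 ≤ (1 - U κ (π / 2)) / κ ∧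
      (1 - U κ (π / 2)) / κ ≤ 2 * (exp (-(π / √2) / κ) / κ) + exp (-c / κ) / κ := by
    filter_upwards [hsmall] with κ hκ
    obtain ⟨hbelow, hclose⟩ := happ κ hκ (π / 2) ⟨by positivity, le_rfl⟩
    have htanh := one_sub_tanh_le (π / 2 / (√2 * κ))
    rw [show -(2 * (π / 2 / (√2 * κ))) = -(π / √2) / κ by ring] at htanh
    have hm : U κ (π / 2) ≤ 1 := by linarith [tanh_lt_one (π / 2 / (√2 * κ))]
    refine ⟨hm, div_nonneg (by linarith) hκ.1.le, ?_⟩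
    rw [← mul_div_assoc, ← add_div]
    exact div_le_div_of_nonneg_right (by linarith) hκ.1.le
  have hgap : Tendsto (fun κ => (1 - U κ (π / 2)) / κ) (𝓝[>] 0) (𝓝 0) := by
    refine tendsto_of_tendsto_of_tendsto_of_le_of_le' tendsto_const_nhds ?_
      (hbound.mono fun _ h => h.2.1) (hbound.mono fun _ h => h.2.2)
    simpa using ((tendsto_exp_neg_div_div_nhdsGT_zero (by positivity)).const_mul 2).add
      (tendsto_exp_neg_div_div_nhdsGT_zero hc)
  refine (tendsto_four_mul_layerIntegral_add (hbound.mono fun _ h => h.1) hgap).congr' ?_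
  filter_upwards [hsmall] with κ hκ
  rw [(hU κ ⟨hκ.1, hκ.2.trans hκ₀.2⟩).energy_eq hκ.1]
  field_simp [hκ.1.ne']
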